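/- arXiv:2008.10446 — 6 statements merged into one kernel-verified Lean document; each statement's English description precedes it below -/
import Mathlib

section
/- Let f be a nonnegative integrable function on ℝ and S(z) = ∫ f(t)/(t - z) dt its Stieltjes transform on the upper half-plane. If f is continuous at a point x₀, then (1/π)·Im S(x₀ + iy) converges to f(x₀) as y → 0+. -/
/-!
For `y > 0`, `(1/π) Im S(x₀ + iy)` is the integral of `f` against the Cauchy density centred at
`x₀` with scale `y`. These densities are the rescalings `y⁻¹ φ((x₀ - t)/y)` of the single
probability density `φ(u) = 1/(π(1 + u²))`, which decays like `|u|⁻²`; so they form an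
approximate identity, and the integrals converge to `f x₀` at every point of continuity.
-/

open MeasureTheory Filter

open Complex ProbabilityTheory Topology Bornology

namespace ProbabilityTheory

lemma cauchyPDFReal_eq_inv_mul_cauchyPDFReal_zero_one (x₀ : ℝ) {y : ℝ} (hy : 0 < y)
    (t : ℝ) :
    cauchyPDFReal x₀ y.toNNReal t = y⁻¹ * cauchyPDFReal 0 1 (y⁻¹ * (x₀ - t)) := by
  simp only [cauchyPDFReal_def, Real.coe_toNNReal _ hy.le, NNReal.coe_one]
  field_simp
  ring

lemma tendsto_norm_mul_cauchyPDFReal_zero_one :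
    Tendsto (fun x : ℝ ↦ ‖x‖ * cauchyPDFReal 0 1 x) (cobounded ℝ) (𝓝 0) := by
  have hinv : Tendsto (fun x : ℝ ↦ Real.pi⁻¹ * ‖x‖⁻¹) (cobounded ℝ) (𝓝 0) := by
    simpa using (tendsto_inv_atTop_zero.comp
      (tendsto_norm_cobounded_atTop (E := ℝ))).const_mul Real.pi⁻¹
  refine squeeze_zero' (Eventually.of_forall fun x ↦ ?_) ?_ hinv
  · have := cauchyPDF_pos 0 one_ne_zero x
    positivity
  · filter_upwards [(tendsto_norm_cobounded_atTop (E := ℝ)).eventually_gt_atTop 0] with x hx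
    calc ‖x‖ * cauchyPDFReal 0 1 x = Real.pi⁻¹ * (‖x‖ / (‖x‖ ^ 2 + 1)) := by
          simp [cauchyPDFReal_def, div_eq_mul_inv]; ring
      _ ≤ Real.pi⁻¹ * ‖x‖⁻¹ := by
          gcongr
          rw [div_le_iff₀ (by positivity), inv_mul_eq_div, le_div_iff₀ hx]
          linarith

theorem tendsto_integral_cauchyPDFReal_smul {E : Type*} [NormedAddCommGroup E]
    [NormedSpace ℝ E] [CompleteSpace E] {g : ℝ → E} {x₀ : ℝ} (hg : Integrable g)
    (hcont : ContinuousAt g x₀) :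
    Tendsto (fun y : ℝ ↦ ∫ t, cauchyPDFReal x₀ y.toNNReal t • g t) (𝓝[>] 0) (𝓝 (g x₀)) := by
  have h := (tendsto_integral_comp_smul_smul_of_integrable'
    (fun x ↦ (cauchyPDF_pos 0 one_ne_zero x).le)
    (integral_cauchyPDFReal_eq_one 0 one_ne_zero)
    (by simpa using tendsto_norm_mul_cauchyPDFReal_zero_one) hg hcont).comp
    tendsto_inv_nhdsGT_zero
  refine h.congr' (eventually_mem_nhdsWithin.mono fun y (hy : 0 < y) ↦ ?_)
  simp [cauchyPDFReal_eq_inv_mul_cauchyPDFReal_zero_one x₀ hy]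

end ProbabilityTheory

lemma integrable_div_sub_of_im_ne_zero {f : ℝ → ℂ} (hf : Integrable f) {z : ℂ}
    (hz : z.im ≠ 0) :
    Integrable fun t : ℝ ↦ f t / (t - z) := by
  refine (hf.norm.div_const |z.im|).mono' (hf.aestronglyMeasurable.div₀ (by fun_prop))
    (Eventually.of_forall fun t ↦ ?_)
  have him : |z.im| ≤ ‖(t : ℂ) - z‖ := by
    simpa using abs_im_le_norm ((t : ℂ) - z)
  rw [norm_div]
  gcongr

lemma im_ofReal_div_sub (a t x y : ℝ) :
    ((a : ℂ) / (t - (x + y * I))).im = a * y / ((t - x) ^ 2 + y ^ 2) := by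
  simp [div_im, normSq_apply]
  ring

lemma im_stieltjes_eq_integral_cauchyPDFReal_mul {f : ℝ → ℝ} (hf : Integrable f) (x₀ : ℝ)
    {y : ℝ} (hy : 0 < y) :
    (1 / Real.pi) * (∫ t : ℝ, (f t : ℂ) / (t - (x₀ + y * I))).im =
      ∫ t, cauchyPDFReal x₀ y.toNNReal t • f t := by
  have hint := integrable_div_sub_of_im_ne_zero hf.ofReal (z := x₀ + y * I) (by simp [hy.ne'])
  have him : (∫ t : ℝ, (f t : ℂ) / (t - (x₀ + y * I))).im =
      ∫ t : ℝ, ((f t : ℂ) / (t - (x₀ + y * I))).im :=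
    (integral_im hint).symm
  rw [him, ← integral_const_mul]
  congr 1 with t
  rw [im_ofReal_div_sub, cauchyPDFReal_def, Real.coe_toNNReal _ hy.le, smul_eq_mul]
  ring

theorem stieltjes_im_tendsto_of_continuousAt_general
    (f : ℝ → ℝ) (hf_int : Integrable f)
    (x₀ : ℝ) (hf_cont : ContinuousAt f x₀) :
    Tendsto (fun y : ℝ =>
        (1 / Real.pi) *
          (∫ t : ℝ, (f t : ℂ) / ((t : ℂ) - ((x₀ : ℂ) + (y : ℂ) * Complex.I))).im)
      (nhdsWithin 0 (Set.Ioi 0)) (nhds (f x₀)) := by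
  refine (tendsto_integral_cauchyPDFReal_smul hf_int hf_cont).congr' ?_
  filter_upwards [self_mem_nhdsWithin] with y hy
  exact (im_stieltjes_eq_integral_cauchyPDFReal_mul hf_int x₀ hy).symm

theorem stieltjes_im_tendsto_of_continuousAt
    (f : ℝ → ℝ) (hf_nonneg : ∀ t, 0 ≤ f t) (hf_int : Integrable f)
    (x₀ : ℝ) (hf_cont : ContinuousAt f x₀) :
    Tendsto (fun y : ℝ =>
        (1 / Real.pi) *
          (∫ t : ℝ, (f t : ℂ) / ((t : ℂ) - ((x₀ : ℂ) + (y : ℂ) * Complex.I))).im)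
      (nhdsWithin 0 (Set.Ioi 0)) (nhds (f x₀)) :=
  stieltjes_im_tendsto_of_continuousAt_general f hf_int x₀ hf_cont
end

section
/- Let ν be a finite positive Borel measure on ℝ with Stieltjes transform s(z) = ∫ dν(t)/(t - z). If lim_{y→0+} Im s(x + iy) = 0 for every x ∈ ℝ, then ν is the zero measure. -/
/-!
On a closed ball of radius `y` around `x`, the Poisson kernel `Im (t - (x + iy))⁻¹` is at least
`1 / (2y)`, so `ν (closedBall x y) ≤ Im s(x + iy) · |closedBall x y|`. The hypothesis then says
that at every point the ratio `ν (closedBall x r) / |closedBall x r|` is eventually below any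
`ε > 0`, and the Besicovitch–Vitali covering theorem turns this into `ν ≤ ε · volume` for every
`ε > 0`, whence `ν = 0`.
-/

open MeasureTheory Filter Metric Set Topology
open scoped ENNReal NNReal

namespace MeasureTheory.Measure

variable {α : Type*} [MeasurableSpace α]

theorem eq_zero_of_forall_le_smul {μ ν : Measure α} [SigmaFinite μ]
    (h : ∀ ε : ℝ≥0, 0 < ε → ν ≤ ε • μ) : ν = 0 := by
  rw [← measure_univ_eq_zero, ← iUnion_spanningSets μ]
  refine measure_iUnion_null fun n => le_antisymm ?_ zero_le
  have hlim : Tendsto (fun ε : ℝ≥0 => (ε : ℝ≥0∞) * μ (spanningSets μ n)) (𝓝[>] 0) (𝓝 0) := by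
    simpa using ENNReal.Tendsto.mul_const
      (ENNReal.tendsto_coe.2 (tendsto_nhdsWithin_of_tendsto_nhds (tendsto_id (x := 𝓝 (0 : ℝ≥0)))))
      (Or.inr (measure_spanningSets_lt_top μ n).ne)
  refine ge_of_tendsto hlim ?_
  filter_upwards [self_mem_nhdsWithin] with ε hε
  exact h ε hε _

variable [MetricSpace α] [SecondCountableTopology α] [BorelSpace α] [HasBesicovitchCovering α]

theorem eq_zero_of_frequently_measure_closedBall_le (μ ν : Measure α)
    [IsLocallyFiniteMeasure μ] [SFinite ν]
    (h : ∀ x, ∀ ε : ℝ≥0, 0 < ε →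
      ∃ᶠ r in 𝓝[>] 0, ν (closedBall x r) ≤ ε * μ (closedBall x r)) :
    ν = 0 := by
  refine eq_zero_of_forall_le_smul (μ := μ) fun ε hε s => ?_
  exact (Besicovitch.vitaliFamily ν).measure_le_of_frequently_le (ε • μ)
    AbsolutelyContinuous.rfl s fun x _ => (Besicovitch.tendsto_filterAt ν x).frequently (h x ε hε)

end MeasureTheory.Measure

noncomputable def stieltjesTransform (ν : Measure ℝ) (z : ℂ) : ℂ :=
  ∫ t : ℝ, ((t : ℂ) - z)⁻¹ ∂ν

namespace Complex

theorem im_inv_ofReal_sub (t : ℝ) (z : ℂ) :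
    ((t : ℂ) - z)⁻¹.im = z.im / ((t - z.re) ^ 2 + z.im ^ 2) := by
  rw [inv_im, normSq_apply]
  simp only [sub_re, sub_im, ofReal_re, ofReal_im]
  ring

theorem abs_im_le_norm_ofReal_sub (t : ℝ) (z : ℂ) : |z.im| ≤ ‖(t : ℂ) - z‖ := by
  simpa using abs_im_le_norm ((t : ℂ) - z)

end Complex

section

variable (ν : Measure ℝ) [IsFiniteMeasure ν] {z : ℂ}

theorem integrable_inv_ofReal_sub (hz : z.im ≠ 0) :
    Integrable (fun t : ℝ => ((t : ℂ) - z)⁻¹) ν := by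
  have hne (t : ℝ) : (t : ℂ) - z ≠ 0 := fun h0 => hz (by simpa using congrArg Complex.im h0)
  refine Integrable.mono' (integrable_const |z.im|⁻¹)
    ((Complex.continuous_ofReal.sub continuous_const).inv₀ hne).aestronglyMeasurable
    (Eventually.of_forall fun t => ?_)
  rw [norm_inv]
  exact inv_anti₀ (abs_pos.2 hz) (Complex.abs_im_le_norm_ofReal_sub t z)

theorem im_stieltjesTransform (hz : z.im ≠ 0) :
    (stieltjesTransform ν z).im = ∫ t, z.im / ((t - z.re) ^ 2 + z.im ^ 2) ∂ν := by
  simp_rw [← Complex.im_inv_ofReal_sub]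
  exact (integral_im (integrable_inv_ofReal_sub ν hz)).symm

theorem measureReal_closedBall_le_im_stieltjesTransform {x y : ℝ} (hy : 0 < y) :
    ν.real (closedBall x y) ≤ 2 * y * (stieltjesTransform ν (x + y * Complex.I)).im := by
  set z : ℂ := x + y * Complex.I
  have hre : z.re = x := by simp [z]
  have him : z.im = y := by simp [z]
  have hz : z.im ≠ 0 := him ▸ hy.ne'
  have hint := (integrable_inv_ofReal_sub ν hz).im
  simp only [RCLike.im_to_complex, Complex.im_inv_ofReal_sub, hre, him] at hint
  rw [im_stieltjesTransform ν hz, hre, him]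
  have hkernel : ∀ t ∈ closedBall x y, 1 / (2 * y) ≤ y / ((t - x) ^ 2 + y ^ 2) := by
    intro t ht
    rw [mem_closedBall, Real.dist_eq, abs_le] at ht
    rw [div_le_div_iff₀ (by positivity) (by positivity)]
    nlinarith
  have hkernel_nonneg : 0 ≤ᵐ[ν] fun t => y / ((t - x) ^ 2 + y ^ 2) :=
    Eventually.of_forall fun t => by positivity
  calc ν.real (closedBall x y) = 2 * y * (1 / (2 * y) * ν.real (closedBall x y)) := by
        field_simp
    _ ≤ 2 * y * ∫ t in closedBall x y, y / ((t - x) ^ 2 + y ^ 2) ∂ν := by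
        gcongr
        exact setIntegral_ge_of_const_le_real measurableSet_closedBall (measure_ne_top ν _)
          hkernel hint.integrableOn
    _ ≤ 2 * y * ∫ t, y / ((t - x) ^ 2 + y ^ 2) ∂ν :=
        mul_le_mul_of_nonneg_left (setIntegral_le_integral hint hkernel_nonneg) (by positivity)

theorem measure_closedBall_le_im_stieltjesTransform_mul_volume {x y : ℝ} (hy : 0 < y) :
    ν (closedBall x y) ≤
      ENNReal.ofReal (stieltjesTransform ν (x + y * Complex.I)).im * volume (closedBall x y) := by
  rw [Real.volume_closedBall, ← ENNReal.ofReal_mul' (by positivity), ← ofReal_measureReal, mul_comm]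
  exact ENNReal.ofReal_le_ofReal (measureReal_closedBall_le_im_stieltjesTransform ν hy)

end

theorem measure_eq_zero_of_stieltjes_im_tendsto_zero
    (ν : Measure ℝ) [IsFiniteMeasure ν]
    (h : ∀ x : ℝ,
      Tendsto (fun y : ℝ =>
          (∫ t : ℝ, ((t : ℂ) - ((x : ℂ) + (y : ℂ) * Complex.I))⁻¹ ∂ν).im)
        (nhdsWithin 0 (Set.Ioi 0)) (nhds 0)) :
    ν = 0 := by
  refine Measure.eq_zero_of_frequently_measure_closedBall_le volume ν fun x ε hε => ?_
  refine Eventually.frequently ?_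
  filter_upwards [(h x).eventually_lt_const (NNReal.coe_pos.2 hε), self_mem_nhdsWithin]
    with y him hy
  calc ν (closedBall x y)
      ≤ ENNReal.ofReal (stieltjesTransform ν (x + y * Complex.I)).im * volume (closedBall x y) :=
        measure_closedBall_le_im_stieltjesTransform_mul_volume ν hy
    _ ≤ ε * volume (closedBall x y) := by
        gcongr
        exact ENNReal.ofReal_coe_nnreal ▸ ENNReal.ofReal_le_ofReal him.le
end

section
/- Let n ≥ 2, A an n×n real symmetric matrix, z ∈ ℂ⁺, and R = (A - zI)⁻¹. Then for each index i, R_{ii} = -(z - A_{ii} + X⁽ⁱ⁾ᵀ R⁽ⁱ⁾ X⁽ⁱ⁾)⁻¹, where X⁽ⁱ⁾ is the i-th column of A with entry i removed and R⁽ⁱ⁾ is the resolvent of the (n-1)×(n-1) matrix A⁽ⁱ⁾ obtained from A by deleting the i-th row and column. -/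
/-!
Reorder the indices so that `i` comes first: `A - zI` becomes a 2×2 block matrix whose top-left
block is the scalar `A i i - z`, and the Schur complement formula for the inverse of a block matrix
gives its top-left entry as the inverse of `A i i - z - Xᵀ (A⁽ⁱ⁾ - zI)⁻¹ X`. Both `A - zI` and
`A⁽ⁱ⁾ - zI` are invertible because Hermitian matrices have real spectrum and `z` is not real.
-/

open Matrix

namespace Matrix

variable {K l m : Type*} [Field K] [Fintype l] [DecidableEq l] [Fintype m] [DecidableEq m]

theorem inv_apply_of_subsingleton [Subsingleton l] (A : Matrix l l K) (a : l) :
    A⁻¹ a a = (A a a)⁻¹ := by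
  simp

theorem inv_fromBlocks_toBlocks₁₁_of_isUnit₂₂ (A : Matrix l l K) (B : Matrix l m K)
    (C : Matrix m l K) (D : Matrix m m K) (hD : IsUnit D) (hABCD : IsUnit (fromBlocks A B C D)) :
    (fromBlocks A B C D)⁻¹.toBlocks₁₁ = (A - B * D⁻¹ * C)⁻¹ := by
  obtain ⟨_⟩ := hD.nonempty_invertible
  obtain ⟨_⟩ := hABCD.nonempty_invertible
  let := invertibleOfFromBlocks₂₂Invertible A B C D
  rw [← invOf_eq_nonsing_inv D, ← invOf_eq_nonsing_inv (A - B * ⅟D * C),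
    ← invOf_eq_nonsing_inv (fromBlocks A B C D), invOf_fromBlocks₂₂_eq, toBlocks_fromBlocks₁₁]

theorem inv_apply_self_eq_inv_sub_dotProduct (M : Matrix m m K) (i : m) (hM : IsUnit M)
    (hD : IsUnit (M.submatrix (Subtype.val : {j // j ≠ i} → m) (Subtype.val : {j // j ≠ i} → m))) :
    M⁻¹ i i = (M i i - (fun j : {j // j ≠ i} => M i j) ⬝ᵥ
      (M.submatrix (Subtype.val : {j // j ≠ i} → m) (Subtype.val : {j // j ≠ i} → m))⁻¹ *ᵥ
        (fun j : {j // j ≠ i} => M j i))⁻¹ := by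
  let e := Equiv.sumCompl (· = i)
  have hblocks : M.submatrix e e = fromBlocks (M.submatrix (↑) (↑)) (M.submatrix (↑) (↑))
      (M.submatrix (↑) (↑)) (M.submatrix (↑) (↑)) := by
    ext (a | a) (b | b) <;> rfl
  have key := congr_fun₂ (inv_fromBlocks_toBlocks₁₁_of_isUnit₂₂ _ _ _ _ hD
    (hblocks ▸ (isUnit_submatrix_equiv e e).2 hM)) ⟨i, rfl⟩ ⟨i, rfl⟩
  rw [← hblocks, inv_submatrix_equiv, inv_apply_of_subsingleton, sub_apply, Matrix.mul_assoc,
    mul_apply'] at key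
  exact key

theorem IsHermitian.isUnit_sub_smul_one {𝕜 : Type*} [RCLike 𝕜] {H : Matrix m m 𝕜}
    (hH : H.IsHermitian) {z : 𝕜} (hz : RCLike.im z ≠ 0) : IsUnit (H - z • 1) := by
  have hzσ : z ∉ spectrum 𝕜 H := by
    rw [hH.spectrum_eq_image_range]
    rintro ⟨r, -, rfl⟩
    exact hz (RCLike.ofReal_im r)
  rw [spectrum.notMem_iff, Algebra.algebraMap_eq_smul_one] at hzσ
  simpa only [neg_sub] using hzσ.neg

end Matrix

theorem resolvent_complement_formula_general
    (n : ℕ) (A : Matrix (Fin n) (Fin n) ℝ) (hA : A.IsSymm)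
    (z : ℂ) (hz : 0 < z.im) (i : Fin n) :
    ((A.map (fun a : ℝ => (a : ℂ)) - z • (1 : Matrix (Fin n) (Fin n) ℂ))⁻¹) i i =
      -(z - (A i i : ℂ) +
          (fun j : {j : Fin n // j ≠ i} => (A j.1 i : ℂ)) ⬝ᵥ
            ((Matrix.of (fun j k : {j : Fin n // j ≠ i} => (A j.1 k.1 : ℂ)) -
                z • (1 : Matrix {j : Fin n // j ≠ i} {j : Fin n // j ≠ i} ℂ))⁻¹).mulVec
              (fun j : {j : Fin n // j ≠ i} => (A j.1 i : ℂ)))⁻¹ := by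
  set M := A.map (fun a : ℝ => (a : ℂ)) - z • (1 : Matrix (Fin n) (Fin n) ℂ)
  have hH : (A.map (fun a : ℝ => (a : ℂ))).IsHermitian :=
    (isHermitian_iff_isSymm.2 hA).map _ fun r => (Complex.conj_ofReal r).symm
  have hminor : M.submatrix (Subtype.val : {j // j ≠ i} → Fin n) Subtype.val =
      Matrix.of (fun j k : {j : Fin n // j ≠ i} => (A j.1 k.1 : ℂ)) - z • 1 := by
    ext j k
    simp [M, one_apply, Subtype.ext_iff]
  have hD := (hH.submatrix (Subtype.val : {j // j ≠ i} → Fin n)).isUnit_sub_smul_one hz.ne'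
  have hoff : ∀ j k, j ≠ k → M j k = A j k := fun j k hjk => by simp [M, one_apply_ne hjk]
  have hrow : (fun j : {j // j ≠ i} => M i j) = fun j => (A j.1 i : ℂ) :=
    funext fun j => by rw [hoff _ _ j.2.symm, hA.apply]
  have hcol : (fun j : {j // j ≠ i} => M j i) = fun j => (A j.1 i : ℂ) :=
    funext fun j => hoff _ _ j.2
  rw [inv_apply_self_eq_inv_sub_dotProduct M i (hH.isUnit_sub_smul_one hz.ne') (hminor ▸ hD),
    hminor, hrow, hcol, ← inv_neg]
  congr 1
  simp only [M, Matrix.sub_apply, map_apply, Matrix.smul_apply, one_apply_eq, smul_eq_mul, mul_one]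
  ring

theorem resolvent_complement_formula
    (n : ℕ) (hn : 2 ≤ n) (A : Matrix (Fin n) (Fin n) ℝ) (hA : A.IsSymm)
    (z : ℂ) (hz : 0 < z.im) (i : Fin n) :
    ((A.map (fun a : ℝ => (a : ℂ)) - z • (1 : Matrix (Fin n) (Fin n) ℂ))⁻¹) i i =
      -(z - (A i i : ℂ) +
          (fun j : {j : Fin n // j ≠ i} => (A j.1 i : ℂ)) ⬝ᵥ
            ((Matrix.of (fun j k : {j : Fin n // j ≠ i} => (A j.1 k.1 : ℂ)) -
                z • (1 : Matrix {j : Fin n // j ≠ i} {j : Fin n // j ≠ i} ℂ))⁻¹).mulVec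
              (fun j : {j : Fin n // j ≠ i} => (A j.1 i : ℂ)))⁻¹ :=
  resolvent_complement_formula_general n A hA z hz i
end

section
/- For c ∈ (0,1), define α_c = (8 + 4c - 13c² - √(c(8-7c)³))/(8(1-c)) and β_c = (8 + 4c - 13c² + √(c(8-7c)³))/(8(1-c)). Then the map c ↦ β_c is strictly increasing on (0,1) and the map c ↦ α_c is strictly decreasing on (0,1). -/
/-!
Write `β_c = N/D + √(c(8-7c)³)/D` and `α_c = N/D - √(c(8-7c)³)/D` with `N = 8 + 4c - 13c²` and
`D = 8(1-c)`. Differentiating gives `8(1-c)²·β_c' = A + rB` and `8(1-c)²·α_c' = A - rB`, where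
`A = 13c² - 26c + 12`, `B = 7c² - 10c + 4 > 0` and `r = √((8-7c)/c)`. The identity
`cA² - (8-7c)B² = -128(1-c)³(2c-1)²` gives `|A| < rB` except at `c = 1/2`, where `A > 0`.
Hence `β_c' > 0` on `(0,1)`, while `α_c' < 0` off the single point `1/2`.
-/

noncomputable def alphaC (c : ℝ) : ℝ :=
  (8 + 4 * c - 13 * c ^ 2 - Real.sqrt (c * (8 - 7 * c) ^ 3)) / (8 * (1 - c))

noncomputable def betaC (c : ℝ) : ℝ :=
  (8 + 4 * c - 13 * c ^ 2 + Real.sqrt (c * (8 - 7 * c) ^ 3)) / (8 * (1 - c))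

open Set Real

theorem strictAntiOn_Ioo_of_hasDerivAt_neg_of_ne {f f' : ℝ → ℝ} {a b m : ℝ} (hm : m ∈ Ioo a b)
    (hf : ∀ x ∈ Ioo a b, HasDerivAt f (f' x) x) (hf' : ∀ x ∈ Ioo a b, x ≠ m → f' x < 0) :
    StrictAntiOn f (Ioo a b) := by
  have hcont : ContinuousOn f (Ioo a b) := fun x hx => (hf x hx).continuousAt.continuousWithinAt
  have left : StrictAntiOn f (Ioc a m) := by
    refine strictAntiOn_of_deriv_neg (convex_Ioc a m)
      (hcont.mono (Ioc_subset_Ioo_right hm.2)) fun x hx => ?_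
    rw [interior_Ioc] at hx
    rw [(hf x ⟨hx.1, hx.2.trans hm.2⟩).deriv]
    exact hf' x ⟨hx.1, hx.2.trans hm.2⟩ hx.2.ne
  have right : StrictAntiOn f (Ico m b) := by
    refine strictAntiOn_of_deriv_neg (convex_Ico m b)
      (hcont.mono (Ico_subset_Ioo_left hm.1)) fun x hx => ?_
    rw [interior_Ico] at hx
    rw [(hf x ⟨hm.1.trans hx.1, hx.2⟩).deriv]
    exact hf' x ⟨hm.1.trans hx.1, hx.2⟩ hx.1.ne'
  rw [← Ioc_union_Ico_eq_Ioo hm.1 hm.2]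
  exact left.union right (isGreatest_Ioc hm.1) (isLeast_Ico hm.2)

def polyA (c : ℝ) : ℝ := 13 * c ^ 2 - 26 * c + 12

def polyB (c : ℝ) : ℝ := 7 * c ^ 2 - 10 * c + 4

theorem polyB_pos (c : ℝ) : 0 < polyB c := by
  unfold polyB; nlinarith [sq_nonneg (7 * c - 5)]

theorem mul_polyA_sq_sub_mul_polyB_sq (c : ℝ) :
    c * polyA c ^ 2 - (8 - 7 * c) * polyB c ^ 2 = -128 * (1 - c) ^ 3 * (2 * c - 1) ^ 2 := by
  unfold polyA polyB; ring

theorem abs_polyA_lt_sqrt_mul_polyB {c : ℝ} (hc0 : 0 < c) (hc1 : c < 1) (hc : c ≠ 1 / 2) :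
    |polyA c| < √((8 - 7 * c) / c) * polyB c := by
  refine abs_lt_of_sq_lt_sq ?_ (mul_nonneg (sqrt_nonneg _) (polyB_pos c).le)
  have hr : √((8 - 7 * c) / c) ^ 2 = (8 - 7 * c) / c := sq_sqrt (by apply div_nonneg <;> linarith)
  have h2c : 0 < (2 * c - 1) ^ 2 := by
    have : 2 * c - 1 ≠ 0 := fun h => hc (by linarith)
    positivity
  have h1c : 0 < (1 - c) ^ 3 := pow_pos (by linarith) 3
  rw [mul_pow, hr, div_mul_eq_mul_div, lt_div_iff₀ hc0]
  nlinarith [mul_polyA_sq_sub_mul_polyB_sq c, mul_pos h1c h2c]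

theorem hasDerivAt_quadratic_div {c : ℝ} (hc : c ≠ 1) :
    HasDerivAt (fun x => (8 + 4 * x - 13 * x ^ 2) / (8 * (1 - x))) (polyA c / (8 * (1 - c) ^ 2))
      c := by
  have hN : HasDerivAt (fun x : ℝ => 8 + 4 * x - 13 * x ^ 2) (4 - 26 * c) c := by
    refine (((hasDerivAt_id c).const_mul 4 |>.const_add 8).sub
      ((hasDerivAt_pow 2 c).const_mul 13)).congr_deriv ?_
    ring
  have hD : HasDerivAt (fun x : ℝ => 8 * (1 - x)) (-8) c := by
    simpa using ((hasDerivAt_id c).const_sub 1).const_mul 8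
  have h1c : 1 - c ≠ 0 := sub_ne_zero.mpr hc.symm
  refine (hN.div hD (by positivity)).congr_deriv ?_
  unfold polyA; field_simp; ring

theorem hasDerivAt_sqrt_div {c : ℝ} (hc0 : 0 < c) (hc1 : c < 1) :
    HasDerivAt (fun x => √(x * (8 - 7 * x) ^ 3) / (8 * (1 - x)))
      (√((8 - 7 * c) / c) * polyB c / (8 * (1 - c) ^ 2)) c := by
  have h87 : 0 < 8 - 7 * c := by linarith
  have hg : HasDerivAt (fun x : ℝ => x * (8 - 7 * x) ^ 3) ((8 - 7 * c) ^ 2 * (8 - 28 * c)) c := by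
    refine ((hasDerivAt_id c).mul
      (((hasDerivAt_id c).const_mul 7 |>.const_sub 8).pow 3)).congr_deriv ?_
    simp only [id_eq, Pi.pow_apply]
    ring
  have hD : HasDerivAt (fun x : ℝ => 8 * (1 - x)) (-8) c := by
    simpa using ((hasDerivAt_id c).const_sub 1).const_mul 8
  have hs : √(c * (8 - 7 * c) ^ 3) * √((8 - 7 * c) / c) = (8 - 7 * c) ^ 2 := by
    rw [← sqrt_mul (by positivity), show c * (8 - 7 * c) ^ 3 * ((8 - 7 * c) / c)
      = ((8 - 7 * c) ^ 2) ^ 2 by field_simp, sqrt_sq (by positivity)]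
  have hs2 : √(c * (8 - 7 * c) ^ 3) ^ 2 = c * (8 - 7 * c) ^ 3 := sq_sqrt (by positivity)
  have h1c : 1 - c ≠ 0 := by linarith
  refine ((hg.sqrt (by positivity)).div hD (by positivity)).congr_deriv ?_
  unfold polyB
  field_simp
  linear_combination 2 * hs2 - 2 * (7 * c ^ 2 - 10 * c + 4) * hs

theorem polyA_add_sqrt_mul_polyB_pos {c : ℝ} (hc0 : 0 < c) (hc1 : c < 1) :
    0 < polyA c + √((8 - 7 * c) / c) * polyB c := by
  by_cases hc : c = 1 / 2
  · have hA : 0 < polyA c := by norm_num [hc, polyA]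
    linarith [mul_nonneg (sqrt_nonneg ((8 - 7 * c) / c)) (polyB_pos c).le]
  · linarith [neg_abs_le (polyA c), abs_polyA_lt_sqrt_mul_polyB hc0 hc1 hc]

theorem polyA_sub_sqrt_mul_polyB_neg {c : ℝ} (hc0 : 0 < c) (hc1 : c < 1) (hc : c ≠ 1 / 2) :
    polyA c - √((8 - 7 * c) / c) * polyB c < 0 := by
  linarith [le_abs_self (polyA c), abs_polyA_lt_sqrt_mul_polyB hc0 hc1 hc]

theorem hasDerivAt_betaC {c : ℝ} (hc0 : 0 < c) (hc1 : c < 1) :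
    HasDerivAt betaC ((polyA c + √((8 - 7 * c) / c) * polyB c) / (8 * (1 - c) ^ 2)) c := by
  have e : betaC = fun x => (8 + 4 * x - 13 * x ^ 2) / (8 * (1 - x))
      + √(x * (8 - 7 * x) ^ 3) / (8 * (1 - x)) := by
    funext x; rw [betaC, add_div]
  rw [e, add_div]
  exact (hasDerivAt_quadratic_div hc1.ne).add (hasDerivAt_sqrt_div hc0 hc1)

theorem hasDerivAt_alphaC {c : ℝ} (hc0 : 0 < c) (hc1 : c < 1) :
    HasDerivAt alphaC ((polyA c - √((8 - 7 * c) / c) * polyB c) / (8 * (1 - c) ^ 2)) c := by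
  have e : alphaC = fun x => (8 + 4 * x - 13 * x ^ 2) / (8 * (1 - x))
      - √(x * (8 - 7 * x) ^ 3) / (8 * (1 - x)) := by
    funext x; rw [alphaC, sub_div]
  rw [e, sub_div]
  exact (hasDerivAt_quadratic_div hc1.ne).sub (hasDerivAt_sqrt_div hc0 hc1)

theorem betaC_strictMono_alphaC_strictAnti :
    StrictMonoOn betaC (Set.Ioo (0 : ℝ) 1) ∧ StrictAntiOn alphaC (Set.Ioo (0 : ℝ) 1) := by
  have hden : ∀ c : ℝ, c < 1 → 0 < 8 * (1 - c) ^ 2 := fun c hc => by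
    have : 0 < 1 - c := by linarith
    positivity
  constructor
  · refine strictMonoOn_of_deriv_pos (convex_Ioo 0 1)
      (fun c hc => (hasDerivAt_betaC hc.1 hc.2).continuousAt.continuousWithinAt) fun c hc => ?_
    rw [interior_Ioo] at hc
    rw [(hasDerivAt_betaC hc.1 hc.2).deriv]
    exact div_pos (polyA_add_sqrt_mul_polyB_pos hc.1 hc.2) (hden c hc.2)
  · refine strictAntiOn_Ioo_of_hasDerivAt_neg_of_ne (m := 1 / 2) ⟨by norm_num, by norm_num⟩
      (fun c hc => hasDerivAt_alphaC hc.1 hc.2) fun c hc hne => ?_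
    exact div_neg_of_neg_of_pos (polyA_sub_sqrt_mul_polyB_neg hc.1 hc.2 hne) (hden c hc.2)
end

section
/- Let f(z) = z·e^z and let p(y) = -y·cot(y) + i·y for y ∈ (0, π) parametrize the curve Im(z e^z) = 0 in the upper half-plane. Then f(p(y)) = -y·e^{-y cot y}/sin(y) is real, strictly decreasing in y on (0, π), tends to -1/e as y → 0+, and tends to -∞ as y → π⁻. -/
/-!
For `z = x + i y` one has `z e^z = e^x ((x cos y - y sin y) + i (x sin y + y cos y))`, so on
`x = -y cot y` the imaginary part vanishes and the real part is `-y e^x / sin y`. Its derivative is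
`-(e^x / sin y) ((y / sin y - cos y)² + sin² y) < 0`. As `y → 0⁺` the value is
`-(sinc y)⁻¹ exp (-(sinc y)⁻¹ cos y)`, continuous at `0` with value `-1/e`; as `y → π⁻`, `cos y < 0`
makes the exponential at least `1`, so the value is at most `-y / sin y → -∞`.
-/

open Filter

/-- Value of `z * exp z` along the curve `Im (z e^z) = 0`, `z = -y cot y + i y`. -/
noncomputable def lambertBoundaryValue (y : ℝ) : ℝ :=
  -y * Real.exp (-y * (Real.cos y / Real.sin y)) / Real.sin y

open Real Topology

theorem Complex.ofReal_add_mul_I_mul_exp (x y : ℝ) :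
    ((x : ℂ) + y * I) * exp (x + y * I) =
      (((x * Real.cos y - y * Real.sin y) * Real.exp x : ℝ) : ℂ) +
        (((x * Real.sin y + y * Real.cos y) * Real.exp x : ℝ) : ℂ) * I := by
  rw [exp_add, exp_mul_I, ← ofReal_cos, ← ofReal_sin, ← ofReal_exp]
  simp only [ofReal_mul, ofReal_sub, ofReal_add]
  linear_combination (y * Real.sin y * Real.exp x : ℂ) * I_sq

theorem mul_exp_lambertBoundaryCurve {y : ℝ} (hy : sin y ≠ 0) :
    (((-y * (cos y / sin y) : ℝ) : ℂ) + (y : ℂ) * Complex.I) *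
        Complex.exp (((-y * (cos y / sin y) : ℝ) : ℂ) + (y : ℂ) * Complex.I) =
      ((lambertBoundaryValue y : ℝ) : ℂ) := by
  have him : -y * (cos y / sin y) * sin y + y * cos y = 0 := by
    field_simp
    ring
  have hre : -y * (cos y / sin y) * cos y - y * sin y = -y / sin y := by
    field_simp
    linear_combination -y * sin_sq_add_cos_sq y
  rw [Complex.ofReal_add_mul_I_mul_exp, him, hre, zero_mul, Complex.ofReal_zero, zero_mul,
    add_zero, lambertBoundaryValue]
  ring_nf

theorem lambertBoundaryValue_eq_div_sin_mul_exp (y : ℝ) :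
    lambertBoundaryValue y = -(y / sin y) * exp (-(y / sin y) * cos y) := by
  rw [lambertBoundaryValue]
  ring_nf

theorem lambertBoundaryValue_eq_inv_sinc (y : ℝ) (hy : y ≠ 0) :
    lambertBoundaryValue y = -(sinc y)⁻¹ * exp (-(sinc y)⁻¹ * cos y) := by
  rw [lambertBoundaryValue_eq_div_sin_mul_exp, sinc_of_ne_zero hy, inv_div]

theorem hasDerivAt_lambertBoundaryValue {y : ℝ} (hy : sin y ≠ 0) :
    HasDerivAt lambertBoundaryValue
      (-(exp (-y * (cos y / sin y)) / sin y) * ((y / sin y - cos y) ^ 2 + sin y ^ 2)) y := by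
  have hcot := (hasDerivAt_cos y).div (hasDerivAt_sin y) hy
  have hexp := ((hasDerivAt_id y).neg.mul hcot).exp
  refine (((hasDerivAt_id y).neg.mul hexp).div (hasDerivAt_sin y) hy).congr_deriv ?_
  simp only [Pi.mul_apply, Pi.div_apply, Pi.neg_apply, id]
  field_simp
  linear_combination (sin y ^ 2 - y ^ 2) * sin_sq_add_cos_sq y

theorem strictAntiOn_lambertBoundaryValue : StrictAntiOn lambertBoundaryValue (Set.Ioo 0 π) := by
  have hsin : ∀ y ∈ Set.Ioo 0 π, 0 < sin y := fun y hy => sin_pos_of_pos_of_lt_pi hy.1 hy.2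
  refine strictAntiOn_of_deriv_neg (convex_Ioo 0 π) (fun y hy =>
    (hasDerivAt_lambertBoundaryValue (hsin y hy).ne').continuousAt.continuousWithinAt) ?_
  rw [interior_Ioo]
  intro y hy
  rw [(hasDerivAt_lambertBoundaryValue (hsin y hy).ne').deriv, neg_mul, neg_lt_zero]
  exact mul_pos (div_pos (exp_pos _) (hsin y hy))
    (add_pos_of_nonneg_of_pos (sq_nonneg _) (pow_pos (hsin y hy) 2))

theorem tendsto_lambertBoundaryValue_nhdsGT_zero :
    Tendsto lambertBoundaryValue (𝓝[>] 0) (𝓝 (-1 / exp 1)) := by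
  have hF : ContinuousAt (fun y => -(sinc y)⁻¹ * exp (-(sinc y)⁻¹ * cos y)) 0 := by
    have : sinc 0 ≠ 0 := by simp [sinc_zero]
    fun_prop (disch := exact this)
  have hF0 : -(sinc 0)⁻¹ * exp (-(sinc 0)⁻¹ * cos 0) = -1 / exp 1 := by
    rw [sinc_zero, cos_zero, inv_one, mul_one, neg_one_mul, exp_neg]
    ring
  rw [← hF0]
  refine (hF.tendsto.mono_left nhdsWithin_le_nhds).congr' ?_
  filter_upwards [self_mem_nhdsWithin] with y (hy : 0 < y)
  exact (lambertBoundaryValue_eq_inv_sinc y hy.ne').symm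

theorem tendsto_div_sin_nhdsLT_pi : Tendsto (fun y => y / sin y) (𝓝[<] π) atTop := by
  have hsin : Tendsto sin (𝓝[<] π) (𝓝[>] 0) := by
    refine tendsto_nhdsWithin_iff.mpr ⟨?_, ?_⟩
    · simpa only [sin_pi] using continuous_sin.continuousWithinAt.tendsto (x := π) (s := Set.Iio π)
    · filter_upwards [Ioo_mem_nhdsLT pi_pos] with y hy
      exact sin_pos_of_pos_of_lt_pi hy.1 hy.2
  exact (tendsto_id.mono_left nhdsWithin_le_nhds).pos_mul_atTop pi_pos
    (tendsto_inv_nhdsGT_zero.comp hsin)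

theorem tendsto_lambertBoundaryValue_nhdsLT_pi :
    Tendsto lambertBoundaryValue (𝓝[<] π) atBot := by
  refine tendsto_atBot_mono' _ ?_ (tendsto_neg_atTop_atBot.comp tendsto_div_sin_nhdsLT_pi)
  filter_upwards [Ioo_mem_nhdsLT (half_lt_self pi_pos)] with y hy
  have hr : 0 ≤ y / sin y := div_nonneg (by linarith [pi_pos, hy.1])
    (sin_pos_of_pos_of_lt_pi (by linarith [pi_pos, hy.1]) hy.2).le
  have hcos : cos y ≤ 0 := cos_nonpos_of_pi_div_two_le_of_le hy.1.le (by linarith [hy.2, pi_pos])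
  have hexp : 1 ≤ exp (-(y / sin y) * cos y) := one_le_exp (by nlinarith)
  rw [lambertBoundaryValue_eq_div_sin_mul_exp, Function.comp_apply]
  nlinarith

theorem lambert_boundary_curve :
    (∀ y ∈ Set.Ioo 0 Real.pi,
        (((-y * (Real.cos y / Real.sin y) : ℝ) : ℂ) + (y : ℂ) * Complex.I) *
            Complex.exp (((-y * (Real.cos y / Real.sin y) : ℝ) : ℂ) + (y : ℂ) * Complex.I) =
          ((lambertBoundaryValue y : ℝ) : ℂ)) ∧
    StrictAntiOn lambertBoundaryValue (Set.Ioo 0 Real.pi) ∧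
    Tendsto lambertBoundaryValue (nhdsWithin 0 (Set.Ioi 0)) (nhds (-1 / Real.exp 1)) ∧
    Tendsto lambertBoundaryValue (nhdsWithin Real.pi (Set.Iio Real.pi)) atBot :=
  ⟨fun _ hy => mul_exp_lambertBoundaryCurve (sin_pos_of_pos_of_lt_pi hy.1 hy.2).ne',
    strictAntiOn_lambertBoundaryValue, tendsto_lambertBoundaryValue_nhdsGT_zero,
    tendsto_lambertBoundaryValue_nhdsLT_pi⟩
end

section
/- Fix γ < 0 and consider g(y) = cos y + 2γ·y·sin y on [0, y*], where y* ∈ (π/2, π) is the unique solution of (2γ/(2γ-1))·y + tan y = 0 in (π/2, π). Then g(0) = 1, g is strictly decreasing on (0, y*), and g(y*) < -1; consequently there is a unique y₀ ∈ (0, y*) with g(y₀) = -1. -/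
/-!
Write `c = 2γ/(2γ-1)`. Since `sin = tan · cos`, the derivative of
`g y = cos y + 2γ y sin y` factors as `(2γ-1) cos y (tan y + c y)` wherever `cos y ≠ 0`.
On `(0, π/2]` it is negative term by term; on `(π/2, y*)` it is negative because
`y ↦ c y + tan y` is strictly increasing there and vanishes at `y*`. At `y*` the same
relation gives `g(y*) cos y* = 1 - 2γ sin² y* ≥ 1 > -cos y*`, so `g(y*) < -1`, and the
intermediate value theorem yields the unique `y₀`.
-/

open Real Set

namespace LambertTsallis

noncomputable def g (γ y : ℝ) : ℝ := cos y + 2 * γ * y * sin y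

lemma g_zero (γ : ℝ) : g γ 0 = 1 := by simp [g]

lemma continuous_g (γ : ℝ) : Continuous (g γ) := by
  unfold g; fun_prop

lemma hasDerivAt_g (γ x : ℝ) :
    HasDerivAt (g γ) ((2 * γ - 1) * sin x + 2 * γ * x * cos x) x := by
  have hlin : HasDerivAt (fun y : ℝ => 2 * γ * y) (2 * γ) x := by
    simpa using (hasDerivAt_id x).const_mul (2 * γ)
  exact ((hasDerivAt_cos x).add (hlin.mul (hasDerivAt_sin x))).congr_deriv (by ring)

lemma cos_ne_zero_of_mem_Ioo {x : ℝ} (hx : x ∈ Ioo (π / 2) π) : cos x ≠ 0 :=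
  (cos_neg_of_pi_div_two_lt_of_lt hx.1 (by linarith [hx.2, pi_pos])).ne

lemma strictMonoOn_mul_add_tan {c : ℝ} (hc : -1 ≤ c) :
    StrictMonoOn (fun y => c * y + tan y) (Ioo (π / 2) π) := by
  refine strictMonoOn_of_deriv_pos (convex_Ioo _ _) ?_ fun x hx => ?_
  · exact (continuousOn_const.mul continuousOn_id).add
      (continuousOn_tan.mono fun x hx => cos_ne_zero_of_mem_Ioo hx)
  rw [interior_Ioo] at hx
  have hcos := cos_ne_zero_of_mem_Ioo hx
  have hd : HasDerivAt (fun y => c * y + tan y) (c + 1 / cos x ^ 2) x := by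
    have hlin : HasDerivAt (fun y : ℝ => c * y) c x := by
      simpa using (hasDerivAt_id x).const_mul c
    exact hlin.add (hasDerivAt_tan hcos)
  have hsin : 0 < sin x := sin_pos_of_pos_of_lt_pi (by linarith [hx.1, pi_pos]) hx.2
  have hcos_sq_lt_one : cos x ^ 2 < 1 := by nlinarith [sin_sq_add_cos_sq x]
  rw [hd.deriv]
  linarith [one_lt_one_div (by positivity) hcos_sq_lt_one]

lemma deriv_g_eq_mul_tan_add {γ x : ℝ} (hγ : 2 * γ - 1 ≠ 0) (hcos : cos x ≠ 0) :
    (2 * γ - 1) * sin x + 2 * γ * x * cos x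
      = (2 * γ - 1) * cos x * (tan x + 2 * γ / (2 * γ - 1) * x) := by
  rw [tan_eq_sin_div_cos]
  field_simp

lemma deriv_g_neg {γ ystar x : ℝ} (hγ : γ < 0) (hystar : ystar ∈ Ioo (π / 2) π)
    (heq : 2 * γ / (2 * γ - 1) * ystar + tan ystar = 0) (hx : x ∈ Ioo 0 ystar) :
    (2 * γ - 1) * sin x + 2 * γ * x * cos x < 0 := by
  obtain ⟨hx0, hxy⟩ := hx
  have hxpi : x < π := hxy.trans hystar.2
  have hsin : 0 < sin x := sin_pos_of_pos_of_lt_pi hx0 hxpi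
  rcases le_or_gt x (π / 2) with hle | hgt
  · have hcos : 0 ≤ cos x := cos_nonneg_of_mem_Icc ⟨by linarith, hle⟩
    have : 2 * γ * x * cos x ≤ 0 :=
      mul_nonpos_of_nonpos_of_nonneg (by nlinarith) hcos
    nlinarith
  · have hcos : cos x < 0 := cos_neg_of_pi_div_two_lt_of_lt hgt (by linarith)
    have hc : -1 ≤ 2 * γ / (2 * γ - 1) := by
      have := div_pos_of_neg_of_neg (by linarith : 2 * γ < 0) (by linarith : 2 * γ - 1 < 0)
      linarith
    have htan : 2 * γ / (2 * γ - 1) * x + tan x < 0 :=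
      heq ▸ strictMonoOn_mul_add_tan hc ⟨hgt, hxpi⟩ hystar hxy
    rw [deriv_g_eq_mul_tan_add (by linarith) hcos.ne]
    exact mul_neg_of_pos_of_neg (mul_pos_of_neg_of_neg (by linarith) hcos) (by linarith)

lemma g_mul_cos_of_tangency {γ y : ℝ} (hγ : 2 * γ - 1 ≠ 0) (hcos : cos y ≠ 0)
    (heq : 2 * γ / (2 * γ - 1) * y + tan y = 0) :
    g γ y * cos y = 1 - 2 * γ * sin y ^ 2 := by
  rw [tan_eq_sin_div_cos] at heq
  field_simp at heq
  have hsin_cos : 2 * γ * y * cos y = -(2 * γ - 1) * sin y := by linear_combination heq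
  unfold g
  linear_combination sin y * hsin_cos + sin_sq_add_cos_sq y

lemma g_lt_neg_one_of_tangency {γ ystar : ℝ} (hγ : γ < 0) (hystar : ystar ∈ Ioo (π / 2) π)
    (heq : 2 * γ / (2 * γ - 1) * ystar + tan ystar = 0) : g γ ystar < -1 := by
  have hcos : cos ystar < 0 :=
    cos_neg_of_pi_div_two_lt_of_lt hystar.1 (by linarith [hystar.2, pi_pos])
  have hcos_gt : -1 < cos ystar := by
    simpa using cos_lt_cos_of_nonneg_of_le_pi (by linarith [hystar.1, pi_pos]) le_rfl hystar.2
  have h := g_mul_cos_of_tangency (by linarith) hcos.ne heq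
  nlinarith [sq_nonneg (sin ystar)]

end LambertTsallis

open LambertTsallis

theorem lambert_tsallis_boundary_gamma_neg_general
    (γ : ℝ) (hγ : γ < 0) (ystar : ℝ)
    (hystar : ystar ∈ Set.Ioo (Real.pi / 2) Real.pi)
    (heq : (2 * γ / (2 * γ - 1)) * ystar + Real.tan ystar = 0) :
    (Real.cos 0 + 2 * γ * 0 * Real.sin 0 = 1) ∧
    StrictAntiOn (fun y : ℝ => Real.cos y + 2 * γ * y * Real.sin y) (Set.Ioo 0 ystar) ∧
    Real.cos ystar + 2 * γ * ystar * Real.sin ystar < -1 ∧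
    (∃! y₀ : ℝ, y₀ ∈ Set.Ioo 0 ystar ∧
        Real.cos y₀ + 2 * γ * y₀ * Real.sin y₀ = -1) := by
  have hystar_pos : 0 < ystar := by linarith [hystar.1, pi_pos]
  have hanti : StrictAntiOn (g γ) (Icc 0 ystar) := by
    refine strictAntiOn_of_deriv_neg (convex_Icc _ _) (continuous_g γ).continuousOn
      fun x hx => ?_
    rw [interior_Icc] at hx
    rw [(hasDerivAt_g γ x).deriv]
    exact deriv_g_neg hγ hystar heq hx
  have hend := g_lt_neg_one_of_tangency hγ hystar heq
  obtain ⟨y₀, hy₀, hgy₀⟩ := intermediate_value_Ioo' hystar_pos.le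
    (continuous_g γ).continuousOn (show (-1 : ℝ) ∈ Ioo (g γ ystar) (g γ 0) by
      rw [g_zero]; exact ⟨hend, by norm_num⟩)
  have hanti' := hanti.mono Ioo_subset_Icc_self
  exact ⟨g_zero γ, hanti', hend, y₀, ⟨hy₀, hgy₀⟩,
    fun z hz => hanti'.injOn hz.1 hy₀ (hz.2.trans hgy₀.symm)⟩

theorem lambert_tsallis_boundary_gamma_neg
    (γ : ℝ) (hγ : γ < 0) (ystar : ℝ)
    (hystar : ystar ∈ Set.Ioo (Real.pi / 2) Real.pi)
    (heq : (2 * γ / (2 * γ - 1)) * ystar + Real.tan ystar = 0)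
    (huniq : ∀ y ∈ Set.Ioo (Real.pi / 2) Real.pi,
        (2 * γ / (2 * γ - 1)) * y + Real.tan y = 0 → y = ystar) :
    (Real.cos 0 + 2 * γ * 0 * Real.sin 0 = 1) ∧
    StrictAntiOn (fun y : ℝ => Real.cos y + 2 * γ * y * Real.sin y) (Set.Ioo 0 ystar) ∧
    Real.cos ystar + 2 * γ * ystar * Real.sin ystar < -1 ∧
    (∃! y₀ : ℝ, y₀ ∈ Set.Ioo 0 ystar ∧
        Real.cos y₀ + 2 * γ * y₀ * Real.sin y₀ = -1) :=
  lambert_tsallis_boundary_gamma_neg_general γ hγ ystar hystar heq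
end
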